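/- Let A be an associative unital k-algebra and λ, μ ∈ k. Define W(a⊗b) = ab⊗1 + λ·1⊗ab − b⊗a, Z(a⊗b) = μ·ab⊗1 + 1⊗ab − b⊗a, X(a⊗b) = ab⊗1 + 1⊗ab − b⊗a. Then (W, X, Z) is a WXZ-system: [W,W,W] = 0, [Z,Z,Z] = 0, [W,X,X] = 0, and [X,X,Z] = 0. -/

import Mathlib

open TensorProduct LinearMap

noncomputable section

variable {k : Type*} [Field k]

/-- `R ⊗ I` acting on the first two factors of `V ⊗ (V ⊗ V)`. -/
def leg12 {V : Type*} [AddCommGroup V] [Module k V]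
    (R : V ⊗[k] V →ₗ[k] V ⊗[k] V) :
    V ⊗[k] (V ⊗[k] V) →ₗ[k] V ⊗[k] (V ⊗[k] V) :=
  (TensorProduct.assoc k V V V).toLinearMap ∘ₗ R.rTensor V ∘ₗ
    (TensorProduct.assoc k V V V).symm.toLinearMap

/-- `I ⊗ R` acting on the last two factors. -/
def leg23 {V : Type*} [AddCommGroup V] [Module k V]
    (R : V ⊗[k] V →ₗ[k] V ⊗[k] V) :
    V ⊗[k] (V ⊗[k] V) →ₗ[k] V ⊗[k] (V ⊗[k] V) :=
  R.lTensor V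

/-- `R¹³ = (I⊗τ)(R⊗I)(I⊗τ)`. -/
def leg13 {V : Type*} [AddCommGroup V] [Module k V]
    (R : V ⊗[k] V →ₗ[k] V ⊗[k] V) :
    V ⊗[k] (V ⊗[k] V) →ₗ[k] V ⊗[k] (V ⊗[k] V) :=
  ((TensorProduct.comm k V V).toLinearMap.lTensor V) ∘ₗ leg12 R ∘ₗ
    ((TensorProduct.comm k V V).toLinearMap.lTensor V)

/-- The constant Yang–Baxter commutator [R,S,T] = R¹²S¹³T²³ − T²³S¹³R¹². -/
def ybComm {V : Type*} [AddCommGroup V] [Module k V]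
    (R S T : V ⊗[k] V →ₗ[k] V ⊗[k] V) :
    V ⊗[k] (V ⊗[k] V) →ₗ[k] V ⊗[k] (V ⊗[k] V) :=
  leg12 R ∘ₗ leg13 S ∘ₗ leg23 T - leg23 T ∘ₗ leg13 S ∘ₗ leg12 R

/-! `W`, `X` and `Z` all belong to the two-parameter family
`R α β (a ⊗ b) = α • ab ⊗ 1 + β • 1 ⊗ ab - b ⊗ a`. Along each of the lines `α = 1` and `β = 1`
the Yang–Baxter commutator of three members of the family is a scalar multiple of a single fixed
tensor, and that scalar vanishes for the four triples in question. -/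

section Legs

variable {V : Type*} [AddCommGroup V] [Module k V] (R : V ⊗[k] V →ₗ[k] V ⊗[k] V) (a b c : V)

@[simp]
theorem leg12_tmul :
    leg12 R (a ⊗ₜ[k] (b ⊗ₜ[k] c)) = TensorProduct.assoc k V V V (R (a ⊗ₜ[k] b) ⊗ₜ[k] c) := by
  simp [leg12]

@[simp]
theorem leg13_tmul :
    leg13 R (a ⊗ₜ[k] (b ⊗ₜ[k] c)) =
      (TensorProduct.comm k V V).toLinearMap.lTensor V
        (TensorProduct.assoc k V V V (R (a ⊗ₜ[k] c) ⊗ₜ[k] b)) := by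
  simp [leg13]

@[simp]
theorem leg23_tmul : leg23 R (a ⊗ₜ[k] (b ⊗ₜ[k] c)) = a ⊗ₜ[k] R (b ⊗ₜ[k] c) := rfl

end Legs

section MulFlip

variable (A : Type*) [Ring A] [Algebra k A]

def mulFlip (α β : k) : A ⊗[k] A →ₗ[k] A ⊗[k] A :=
  (α • (TensorProduct.mk k A A).flip 1 + β • TensorProduct.mk k A A 1) ∘ₗ LinearMap.mul' k A -
    (TensorProduct.comm k A A).toLinearMap

variable {A}

@[simp]
theorem mulFlip_tmul (α β : k) (a b : A) :
    mulFlip A α β (a ⊗ₜ[k] b) = α • ((a * b) ⊗ₜ[k] 1) + β • (1 ⊗ₜ[k] (a * b)) - b ⊗ₜ[k] a := by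
  simp [mulFlip]

theorem ybComm_mulFlip_one_left_tmul (β₁ β₂ β₃ : k) (a b c : A) :
    ybComm (mulFlip A 1 β₁) (mulFlip A 1 β₂) (mulFlip A 1 β₃) (a ⊗ₜ[k] (b ⊗ₜ[k] c)) =
      ((β₁ - 1) * (β₂ - β₃)) • (1 ⊗ₜ[k] ((b * c) ⊗ₜ[k] a) - 1 ⊗ₜ[k] ((a * b * c) ⊗ₜ[k] 1)) := by
  simp only [ybComm, LinearMap.sub_apply, coe_comp, Function.comp_apply, leg12_tmul, leg13_tmul,
    leg23_tmul, mulFlip_tmul, tmul_sub, sub_tmul, tmul_add, add_tmul, tmul_smul, ← smul_tmul',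
    map_add, map_sub, map_smul, LinearEquiv.coe_coe, assoc_tmul, lTensor_tmul, comm_tmul, mul_one,
    one_mul, mul_assoc]
  module

theorem ybComm_mulFlip_one_right_tmul (α₁ α₂ α₃ : k) (a b c : A) :
    ybComm (mulFlip A α₁ 1) (mulFlip A α₂ 1) (mulFlip A α₃ 1) (a ⊗ₜ[k] (b ⊗ₜ[k] c)) =
      ((α₃ - 1) * (α₁ - α₂)) • (c ⊗ₜ[k] ((a * b) ⊗ₜ[k] 1) - 1 ⊗ₜ[k] ((a * b * c) ⊗ₜ[k] 1)) := by
  simp only [ybComm, LinearMap.sub_apply, coe_comp, Function.comp_apply, leg12_tmul, leg13_tmul,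
    leg23_tmul, mulFlip_tmul, tmul_sub, sub_tmul, tmul_add, add_tmul, tmul_smul, ← smul_tmul',
    map_add, map_sub, map_smul, LinearEquiv.coe_coe, assoc_tmul, lTensor_tmul, comm_tmul, mul_one,
    one_mul, mul_assoc]
  module

theorem ybComm_mulFlip_one_left_eq_zero (β β' : k) :
    ybComm (mulFlip A 1 β) (mulFlip A 1 β') (mulFlip A 1 β') = 0 :=
  ext_threefold' fun a b c => by
    rw [ybComm_mulFlip_one_left_tmul, sub_self, mul_zero, zero_smul, LinearMap.zero_apply]

theorem ybComm_mulFlip_one_right_eq_zero (α α' : k) :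
    ybComm (mulFlip A α 1) (mulFlip A α 1) (mulFlip A α' 1) = 0 :=
  ext_threefold' fun a b c => by
    rw [ybComm_mulFlip_one_right_tmul, sub_self, mul_zero, zero_smul, LinearMap.zero_apply]

end MulFlip

theorem wxz_system_from_algebra
    (A : Type*) [Ring A] [Algebra k A] (lam mu : k)
    (W Z X : A ⊗[k] A →ₗ[k] A ⊗[k] A)
    (hW : ∀ a b : A, W (a ⊗ₜ[k] b) =
      (a * b) ⊗ₜ[k] (1 : A) + lam • ((1 : A) ⊗ₜ[k] (a * b)) - b ⊗ₜ[k] a)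
    (hZ : ∀ a b : A, Z (a ⊗ₜ[k] b) =
      mu • ((a * b) ⊗ₜ[k] (1 : A)) + (1 : A) ⊗ₜ[k] (a * b) - b ⊗ₜ[k] a)
    (hX : ∀ a b : A, X (a ⊗ₜ[k] b) =
      (a * b) ⊗ₜ[k] (1 : A) + (1 : A) ⊗ₜ[k] (a * b) - b ⊗ₜ[k] a) :
    ybComm W W W = 0 ∧ ybComm Z Z Z = 0 ∧ ybComm W X X = 0 ∧ ybComm X X Z = 0 := by
  obtain rfl : W = mulFlip A 1 lam := ext' fun a b => by rw [hW, mulFlip_tmul, one_smul]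
  obtain rfl : Z = mulFlip A mu 1 := ext' fun a b => by rw [hZ, mulFlip_tmul, one_smul]
  obtain rfl : X = mulFlip A 1 1 := ext' fun a b => by rw [hX, mulFlip_tmul, one_smul, one_smul]
  exact ⟨ybComm_mulFlip_one_left_eq_zero lam lam, ybComm_mulFlip_one_right_eq_zero mu mu,
    ybComm_mulFlip_one_left_eq_zero lam 1, ybComm_mulFlip_one_right_eq_zero 1 mu⟩
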